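/- (Steane enlargement) Let C be an [n, k, d]_2 binary linear code with C^⊥ ⊆ C (Euclidean dual), and suppose C can be enlarged to a binary linear code C' ⊇ C of dimension k' > k + 1 and minimum distance d'. Then there exists an [[n, k + k' − n, D]] qubit code with D = min{ d, ⌈3d'/2⌉ }, i.e., a subspace Q of ℂ^{2^n} of dimension 2^{k+k'−n} satisfying the Knill–Laflamme condition for D. -/

import Mathlib

open Matrix

open scoped BigOperators

/-- The bit-flip type error operator `X(a)`, acting on `ℂ^{2^n}` (with
coordinates indexed by `F_2^n`) by `X(a) e_v = e_{a+v}`. -/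
noncomputable def Xop (n : ℕ) (a : Fin n → ZMod 2) :
    Matrix (Fin n → ZMod 2) (Fin n → ZMod 2) ℂ :=
  Matrix.of fun w v => if w = a + v then 1 else 0

/-- The phase-flip type error operator `Z(b)`, acting on `ℂ^{2^n}` by
`Z(b) e_v = (−1)^{b·v} e_v`, the `F_2` dot product `b·v` being lifted to
`{0,1} ⊆ ℤ` in the exponent. -/
noncomputable def Zop (n : ℕ) (b : Fin n → ZMod 2) :
    Matrix (Fin n → ZMod 2) (Fin n → ZMod 2) ℂ :=
  Matrix.of fun w v => if w = v then ((-1 : ℂ) ^ (b ⬝ᵥ v).val) else 0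

/-- The quantum weight of `(a|b) ∈ F_2^{2n}`. -/
def wQ (n : ℕ) (a b : Fin n → ZMod 2) : ℕ :=
  (Finset.univ.filter fun i : Fin n => a i ≠ 0 ∨ b i ≠ 0).card

/-- The Hamming weight of a binary vector. -/
def wHb (n : ℕ) (x : Fin n → ZMod 2) : ℕ :=
  (Finset.univ.filter fun i : Fin n => x i ≠ 0).card

/-- The minimum Hamming weight of the nonzero codewords of a binary code. -/
noncomputable def dminb (n : ℕ) (C : Submodule (ZMod 2) (Fin n → ZMod 2)) : ℕ :=
  sInf (wHb n '' {x : Fin n → ZMod 2 | x ∈ C ∧ x ≠ 0})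

/-- The Euclidean dual of a binary linear code. -/
def dualEb (n : ℕ) (C : Submodule (ZMod 2) (Fin n → ZMod 2)) :
    Set (Fin n → ZMod 2) :=
  {x | ∀ c ∈ C, x ⬝ᵥ c = 0}

/-!
Steane's code is a stabilizer code. Put `E = C^⊥ ⊆ C`, which is self-orthogonal, and
`D = C'^⊥ ⊆ E`. Multiplication by an element of `𝔽_{2^m} \ 𝔽₂`, `m = k' - k = dim E/D`, lifts to a
linear `g` with `g(D) = 0` such that both `g` and `g + 1` map `E` onto `E` modulo `D`. The code is
spanned by the states `∑_{e ∈ E} (-1)^{g(e)·x} |x + e⟩`, `x` running over a complement `R` of `E`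
in `C'`; their supports are disjoint cosets, so the dimension is `2^{dim R} = 2^{k+k'-n}`.

A Pauli error `X(a)Z(b) ≠ 1` has vanishing matrix elements between these states unless `a ∈ C'`
and `g(e)·a + b·e = 0` for all `e ∈ E`, i.e. unless it commutes with all stabilizers
`X(e)Z(g e)`. In that case `b ∈ C'`, and if `a ∉ C` the surjectivity of `g` and `g + 1` modulo `D`
forces `b ∉ C` and `a + b ∉ C`; then `a`, `b`, `a + b` are nonzero words of `C'` whose weights
sum to at least `3d'` and at most `2 wQ(a|b)`. Hence `a ∈ C`, and `wQ(a|b) < d` gives `a = b = 0`.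
-/

open Module

namespace Steane

noncomputable def sgn (p : ZMod 2) : ℂ := (-1) ^ p.val

@[simp] lemma sgn_zero : sgn 0 = 1 := by simp [sgn]

@[simp] lemma sgn_one : sgn 1 = -1 := by simp [sgn, ZMod.val_one]

lemma sgn_add (p q : ZMod 2) : sgn (p + q) = sgn p * sgn q := by
  rw [sgn, sgn, sgn, ZMod.val_add, ← neg_one_pow_eq_pow_mod_two, pow_add]

@[simp] lemma star_sgn (p : ZMod 2) : star (sgn p) = sgn p := by simp [sgn]

section Pauli

variable {n : ℕ}

lemma Xop_mulVec (a : Fin n → ZMod 2) (u : (Fin n → ZMod 2) → ℂ) (v : Fin n → ZMod 2) :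
    (Xop n a *ᵥ u) v = u (v + a) := by
  have hva : ∀ w, v = a + w ↔ w = v + a := fun w => by
    rw [← sub_eq_iff_eq_add', ZModModule.sub_eq_add, eq_comm]
  simp [Xop, mulVec, dotProduct, hva]

lemma Zop_mulVec (b : Fin n → ZMod 2) (u : (Fin n → ZMod 2) → ℂ) (v : Fin n → ZMod 2) :
    (Zop n b *ᵥ u) v = sgn (b ⬝ᵥ v) * u v := by
  simp [Zop, mulVec, dotProduct, sgn]

lemma Xop_mul_Zop_mulVec (a b : Fin n → ZMod 2) (u : (Fin n → ZMod 2) → ℂ)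
    (v : Fin n → ZMod 2) :
    ((Xop n a * Zop n b) *ᵥ u) v = sgn (b ⬝ᵥ (v + a)) * u (v + a) := by
  rw [← mulVec_mulVec, Xop_mulVec, Zop_mulVec]

lemma Xop_zero_mul_Zop_zero_mulVec (u : (Fin n → ZMod 2) → ℂ) :
    (Xop n 0 * Zop n 0) *ᵥ u = u := by
  ext v
  simp [Xop_mul_Zop_mulVec]

end Pauli

lemma sum_eq_zero_of_map_add_eq_neg {G M : Type*} [AddGroup G] [Fintype G] [AddCommGroup M]
    [IsAddTorsionFree M] {f : G → M} (s : G) (h : ∀ v, f (v + s) = -f v) : ∑ v, f v = 0 := by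
  refine self_eq_neg.mp ?_
  calc ∑ v, f v = ∑ v, f (v + s) := (Equiv.sum_comp (Equiv.addRight s) f).symm
    _ = -∑ v, f v := by simp only [h, Finset.sum_neg_distrib]

lemma dotProduct_mulVec_eq_zero_of_mem_span {ι R : Type*} [Fintype ι] [CommRing R] [StarRing R]
    {S : Set (ι → R)} (M : Matrix ι ι R) (h : ∀ s ∈ S, ∀ t ∈ S, star s ⬝ᵥ M *ᵥ t = 0)
    {φ ψ : ι → R} (hφ : φ ∈ Submodule.span R S) (hψ : ψ ∈ Submodule.span R S) :
    star φ ⬝ᵥ M *ᵥ ψ = 0 := by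
  have hleft : ∀ t ∈ S, star φ ⬝ᵥ M *ᵥ t = 0 := by
    intro t ht
    induction hφ using Submodule.span_induction with
    | mem s hs => exact h s hs t ht
    | zero => simp
    | add _ _ _ _ h₁ h₂ => rw [star_add, add_dotProduct, h₁, h₂, add_zero]
    | smul c _ _ h₁ => rw [star_smul, smul_dotProduct, h₁, smul_zero]
  induction hψ using Submodule.span_induction with
  | mem t ht => exact hleft t ht
  | zero => simp
  | add _ _ _ _ h₁ h₂ => rw [mulVec_add, dotProduct_add, h₁, h₂, add_zero]
  | smul c _ _ h₁ => rw [mulVec_smul, dotProduct_smul, h₁, smul_zero]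

section Dual

variable {K ι : Type*} [Field K] [Fintype ι]

def dualCode (C : Submodule K (ι → K)) : Submodule K (ι → K) :=
  LinearMap.BilinForm.orthogonal (dotProductBilin (m := ι) K K) C

lemma mem_dualCode {C : Submodule K (ι → K)} {x : ι → K} :
    x ∈ dualCode C ↔ ∀ c ∈ C, x ⬝ᵥ c = 0 := by
  simp [dualCode, LinearMap.BilinForm.mem_orthogonal_iff, dotProduct_comm x]

lemma dualCode_anti {C C' : Submodule K (ι → K)} (h : C ≤ C') : dualCode C' ≤ dualCode C :=
  LinearMap.BilinForm.orthogonal_le h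

lemma dotProductBilin_nondegenerate :
    (dotProductBilin (m := ι) K K : LinearMap.BilinForm K (ι → K)).Nondegenerate := by
  classical
  refine LinearMap.BilinForm.Nondegenerate.ofSeparatingLeft fun x hx => funext fun i => ?_
  simpa using hx (Pi.single i 1)

lemma finrank_dualCode (C : Submodule K (ι → K)) :
    finrank K (dualCode C) = Fintype.card ι - finrank K C := by
  rw [dualCode, LinearMap.BilinForm.finrank_orthogonal dotProductBilin_nondegenerate,
    finrank_fintype_fun_eq_card]

lemma dualCode_dualCode (C : Submodule K (ι → K)) : dualCode (dualCode C) = C :=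
  LinearMap.BilinForm.orthogonal_orthogonal dotProductBilin_nondegenerate
    (fun x y h => by simpa [dotProduct_comm] using h) C

lemma mem_of_forall_dotProduct_eq_zero {C C' : Submodule K (ι → K)}
    {h : (ι → K) →ₗ[K] (ι → K)} (hh : dualCode C ≤ (dualCode C).map h ⊔ dualCode C')
    {a : ι → K} (ha : a ∈ C') (h0 : ∀ e ∈ dualCode C, h e ⬝ᵥ a = 0) : a ∈ C := by
  rw [← dualCode_dualCode C, mem_dualCode]
  intro e he
  obtain ⟨y, hy, z, hz, rfl⟩ := Submodule.mem_sup.1 (hh he)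
  obtain ⟨e', he', rfl⟩ := Submodule.mem_map.1 hy
  rw [dotProduct_comm, add_dotProduct, h0 e' he', mem_dualCode.1 hz a ha, add_zero]

end Dual

lemma exists_disjoint_finrank_add_eq {K V : Type*} [DivisionRing K] [AddCommGroup V]
    [Module K V] [FiniteDimensional K V] {E C : Submodule K V} (h : E ≤ C) :
    ∃ R ≤ C, Disjoint R E ∧ finrank K R + finrank K E = finrank K C := by
  obtain ⟨⟨R, hRC⟩, hc⟩ := exists_isCompl (⟨E, h⟩ : Set.Iic C)
  have hinf : E ⊓ R = ⊥ := congrArg Subtype.val hc.inf_eq_bot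
  have hsup : E ⊔ R = C := congrArg Subtype.val hc.sup_eq_top
  refine ⟨R, hRC, disjoint_iff.2 (by rw [inf_comm, hinf]), ?_⟩
  have := Submodule.finrank_sup_add_finrank_inf_eq E R
  rw [hinf, hsup, finrank_bot] at this
  omega

lemma exists_surjective_add_one_surjective {W : Type*} [AddCommGroup W] [Module (ZMod 2) W]
    [FiniteDimensional (ZMod 2) W] (hW : 2 ≤ finrank (ZMod 2) W) :
    ∃ f : W →ₗ[ZMod 2] W, Function.Surjective f ∧ Function.Surjective ⇑(f + 1) := by
  set m := finrank (ZMod 2) W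
  have hm : m ≠ 0 := by omega
  obtain ⟨φ⟩ : Nonempty (W ≃ₗ[ZMod 2] GaloisField 2 m) :=
    FiniteDimensional.nonempty_linearEquiv_of_finrank_eq (GaloisField.finrank 2 hm).symm
  obtain ⟨α, hα0, hα1⟩ : ∃ α : GaloisField 2 m, α ≠ 0 ∧ α + 1 ≠ 0 := by
    by_contra! h
    have hsurj : Function.Surjective ![(0 : GaloisField 2 m), 1] := fun α => by
      by_cases hα : α = 0
      · exact ⟨0, hα.symm⟩
      · exact ⟨1, (eq_of_sub_eq_zero (by rw [ZModModule.sub_eq_add]; exact h α hα)).symm⟩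
    have := Nat.card_le_card_of_surjective _ hsurj
    rw [GaloisField.card 2 m hm, Nat.card_eq_fintype_card, Fintype.card_fin] at this
    have : 2 ^ 2 ≤ 2 ^ m := Nat.pow_le_pow_right (by norm_num) hW
    omega
  have hmul : ∀ c : GaloisField 2 m, c ≠ 0 →
      Function.Surjective (φ.symm.toLinearMap ∘ₗ LinearMap.mulLeft (ZMod 2) c ∘ₗ φ.toLinearMap) :=
    fun c hc w => ⟨φ.symm (c⁻¹ * φ w), by simp [hc]⟩
  refine ⟨φ.symm.toLinearMap ∘ₗ LinearMap.mulLeft (ZMod 2) α ∘ₗ φ.toLinearMap, hmul α hα0, ?_⟩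
  convert hmul (α + 1) hα1 using 1
  ext w
  simp [add_mul]

lemma exists_twist {V : Type*} [AddCommGroup V] [Module (ZMod 2) V] [FiniteDimensional (ZMod 2) V]
    {D E : Submodule (ZMod 2) V} (hDE : D ≤ E)
    (hdim : finrank (ZMod 2) D + 2 ≤ finrank (ZMod 2) E) :
    ∃ g : V →ₗ[ZMod 2] V, (∀ e ∈ E, g e ∈ E) ∧ D ≤ LinearMap.ker g ∧
      E ≤ E.map g ⊔ D ∧ E ≤ E.map (g + 1) ⊔ D := by
  set D' := D.comap E.subtype
  have hquot : 2 ≤ finrank (ZMod 2) (E ⧸ D') := by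
    have := D'.finrank_quotient_add_finrank
    rw [(Submodule.comapSubtypeEquivOfLe hDE).finrank_eq] at this
    omega
  obtain ⟨f, hf, hf1⟩ := exists_surjective_add_one_surjective hquot
  obtain ⟨s, hs⟩ := D'.mkQ.exists_rightInverse_of_surjective D'.range_mkQ
  have hπs : ∀ y, D'.mkQ (s y) = y := LinearMap.congr_fun hs
  obtain ⟨g, hg⟩ := LinearMap.exists_extend (E.subtype ∘ₗ s ∘ₗ f ∘ₗ D'.mkQ)
  have hgE : ∀ e : E, g e = s (f (D'.mkQ e)) := LinearMap.congr_fun hg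
  have onto : ∀ (h : Module.End (ZMod 2) (E ⧸ D')) (G : V →ₗ[ZMod 2] V),
      Function.Surjective h → (∀ y, G (s y) = s (h y)) → E ≤ E.map G ⊔ D := by
    intro h G hh hG e he
    obtain ⟨y, hy⟩ := hh (D'.mkQ ⟨e, he⟩)
    have hD' : (⟨e, he⟩ : E) - s (D'.mkQ ⟨e, he⟩) ∈ D' := by
      rw [← Submodule.Quotient.mk_eq_zero, ← Submodule.mkQ_apply, map_sub, hπs, sub_self]
    have hD : e - G (s y) ∈ D := by
      rw [hG, hy]
      exact hD'
    simpa using Submodule.mem_sup.2 ⟨_, Submodule.mem_map_of_mem (s y).2, _, hD, add_sub_cancel _ _⟩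
  refine ⟨g, fun e he => by simp [hgE ⟨e, he⟩], fun e he => ?_, onto f g hf ?_,
    onto (f + 1) (g + 1) hf1 ?_⟩
  · have : D'.mkQ ⟨e, hDE he⟩ = 0 := by simpa [D'] using he
    simp [hgE ⟨e, hDE he⟩, this]
  · exact fun y => by simp [hgE, hπs]
  · exact fun y => by simp [hgE, hπs]

section TwistedCosetState

variable {n : ℕ} (E : Submodule (ZMod 2) (Fin n → ZMod 2))
  (g : (Fin n → ZMod 2) →ₗ[ZMod 2] (Fin n → ZMod 2))

open Classical in
/-- The vector `∑_{e ∈ E} (-1)^{g(e)·x} |x + e⟩`. -/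
noncomputable def twistedCosetState (x : Fin n → ZMod 2) : (Fin n → ZMod 2) → ℂ :=
  fun v => if v + x ∈ E then sgn (g (v + x) ⬝ᵥ x) else 0

variable {E}

lemma twistedCosetState_of_notMem {x v : Fin n → ZMod 2} (h : v + x ∉ E) :
    twistedCosetState E g x v = 0 := by
  simp [twistedCosetState, h]

lemma twistedCosetState_self (x : Fin n → ZMod 2) : twistedCosetState E g x x = 1 := by
  simp [twistedCosetState, ZModModule.add_self]

lemma twistedCosetState_add_of_mem {e : Fin n → ZMod 2} (he : e ∈ E) (x v : Fin n → ZMod 2) :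
    twistedCosetState E g x (v + e) = sgn (g e ⬝ᵥ x) * twistedCosetState E g x v := by
  rw [twistedCosetState, twistedCosetState, add_right_comm, E.add_mem_iff_left he]
  split_ifs
  · rw [map_add, add_dotProduct, sgn_add, mul_comm]
  · rw [mul_zero]

lemma star_twistedCosetState (x : Fin n → ZMod 2) :
    star (twistedCosetState E g x) = twistedCosetState E g x := by
  ext v
  rw [Pi.star_apply, twistedCosetState]
  split_ifs <;> simp

lemma linearIndependent_twistedCosetState {R : Submodule (ZMod 2) (Fin n → ZMod 2)}
    (hR : Disjoint R E) : LinearIndependent ℂ fun x : R => twistedCosetState E g x := by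
  classical
  have hdiag : ∀ x y : R, twistedCosetState E g x y = if x = y then 1 else 0 := by
    intro x y
    split_ifs with hxy
    · rw [hxy, twistedCosetState_self]
    · refine twistedCosetState_of_notMem g fun hE => hxy ?_
      have h0 := Submodule.disjoint_def.1 hR _ (R.add_mem y.2 x.2) hE
      rw [add_eq_zero_iff_eq_neg, ZModModule.neg_eq_self] at h0
      exact Subtype.ext h0.symm
  rw [Fintype.linearIndependent_iff]
  intro c hc y
  simpa [Finset.sum_apply, hdiag] using congr_fun hc y

variable {a b : Fin n → ZMod 2}

lemma dotProduct_Xop_mul_Zop_twistedCosetState (x x' : Fin n → ZMod 2) :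
    star (twistedCosetState E g x') ⬝ᵥ (Xop n a * Zop n b) *ᵥ twistedCosetState E g x =
      ∑ v, twistedCosetState E g x' v *
        (sgn (b ⬝ᵥ (v + a)) * twistedCosetState E g x (v + a)) := by
  simp only [star_twistedCosetState, dotProduct, Xop_mul_Zop_mulVec]

lemma dotProduct_Xop_mul_Zop_twistedCosetState_of_notMem {x x' : Fin n → ZMod 2}
    (h : a + x + x' ∉ E) :
    star (twistedCosetState E g x') ⬝ᵥ (Xop n a * Zop n b) *ᵥ twistedCosetState E g x = 0 := by
  rw [dotProduct_Xop_mul_Zop_twistedCosetState]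
  refine Finset.sum_eq_zero fun v _ => ?_
  by_cases hv : v + x' ∈ E
  · have : v + a + x ∉ E := fun hv' => h <| by
      convert E.add_mem hv hv' using 1
      rw [show v + x' + (v + a + x) = v + v + (a + x + x') by abel, ZModModule.add_self,
        zero_add]
    rw [twistedCosetState_of_notMem g this, mul_zero, mul_zero]
  · rw [twistedCosetState_of_notMem g hv, zero_mul]

/-- If `X(a)Z(b)` anticommutes with the stabilizer `X(e₀)Z(g e₀)`, its matrix elements vanish. -/
lemma dotProduct_Xop_mul_Zop_twistedCosetState_of_mem (hE : ∀ e ∈ E, ∀ e' ∈ E, e ⬝ᵥ e' = 0)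
    (hgE : ∀ e ∈ E, g e ∈ E) {e₀ : Fin n → ZMod 2} (he₀ : e₀ ∈ E)
    (hodd : g e₀ ⬝ᵥ a + b ⬝ᵥ e₀ = 1) {x x' : Fin n → ZMod 2} (h : a + x + x' ∈ E) :
    star (twistedCosetState E g x') ⬝ᵥ (Xop n a * Zop n b) *ᵥ twistedCosetState E g x = 0 := by
  rw [dotProduct_Xop_mul_Zop_twistedCosetState]
  refine sum_eq_zero_of_map_add_eq_neg e₀ fun v => ?_
  have hsign : g e₀ ⬝ᵥ x' + b ⬝ᵥ e₀ + g e₀ ⬝ᵥ x = 1 := by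
    rw [← hodd, ← add_zero (g e₀ ⬝ᵥ a + _), ← hE _ (hgE _ he₀) _ h]
    have h2 : (2 : ZMod 2) = 0 := rfl
    simp only [dotProduct_add]
    linear_combination (-(g e₀ ⬝ᵥ a)) * h2
  rw [add_right_comm v e₀ a, twistedCosetState_add_of_mem g he₀,
    twistedCosetState_add_of_mem g he₀, dotProduct_add, sgn_add]
  calc _ = sgn (g e₀ ⬝ᵥ x' + b ⬝ᵥ e₀ + g e₀ ⬝ᵥ x) * (twistedCosetState E g x' v *
        (sgn (b ⬝ᵥ (v + a)) * twistedCosetState E g x (v + a))) := by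
          rw [sgn_add, sgn_add]; ring
    _ = _ := by rw [hsign, sgn_one, neg_one_mul]

end TwistedCosetState

section Weight

variable {n : ℕ}

lemma wHb_le_wQ_left (a b : Fin n → ZMod 2) : wHb n a ≤ wQ n a b :=
  Finset.card_le_card <| Finset.monotone_filter_right _ fun _ _ => Or.inl

lemma wHb_le_wQ_right (a b : Fin n → ZMod 2) : wHb n b ≤ wQ n a b :=
  Finset.card_le_card <| Finset.monotone_filter_right _ fun _ _ => Or.inr

lemma wHb_add_wHb_add_wHb_add_le (a b : Fin n → ZMod 2) :
    wHb n a + wHb n b + wHb n (a + b) ≤ 2 * wQ n a b := by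
  have key : ∀ p q : ZMod 2,
      ((if p ≠ 0 then 1 else 0) + (if q ≠ 0 then 1 else 0) + (if p + q ≠ 0 then 1 else 0) : ℕ)
        ≤ 2 * (if p ≠ 0 ∨ q ≠ 0 then 1 else 0) := by decide
  simp only [wHb, wQ, Finset.card_filter, ← Finset.sum_add_distrib, Finset.mul_sum]
  exact Finset.sum_le_sum fun i _ => key (a i) (b i)

lemma wQ_pos {a b : Fin n → ZMod 2} (hab : ¬(a = 0 ∧ b = 0)) : 0 < wQ n a b := by
  refine Nat.pos_of_ne_zero fun h => hab ?_
  simp only [wQ, Finset.card_eq_zero, Finset.filter_eq_empty_iff, Finset.mem_univ, true_implies,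
    not_or, not_not] at h
  exact ⟨funext fun i => (@h i).1, funext fun i => (@h i).2⟩

lemma dminb_le_wHb {C : Submodule (ZMod 2) (Fin n → ZMod 2)} {x : Fin n → ZMod 2} (hx : x ∈ C)
    (hx0 : x ≠ 0) : dminb n C ≤ wHb n x :=
  Nat.sInf_le ⟨x, ⟨hx, hx0⟩, rfl⟩

lemma eq_zero_of_wHb_lt_dminb {C : Submodule (ZMod 2) (Fin n → ZMod 2)} {x : Fin n → ZMod 2}
    (hx : x ∈ C) (hw : wHb n x < dminb n C) : x = 0 := by
  by_contra hx0
  exact hw.not_ge (dminb_le_wHb hx hx0)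

end Weight

theorem exists_mem_dualCode_dotProduct_eq_one {n : ℕ} {C C' : Submodule (ZMod 2) (Fin n → ZMod 2)}
    (hCC' : C ≤ C') {g : (Fin n → ZMod 2) →ₗ[ZMod 2] (Fin n → ZMod 2)}
    (hgD : dualCode C' ≤ LinearMap.ker g)
    (hg : dualCode C ≤ (dualCode C).map g ⊔ dualCode C')
    (hg1 : dualCode C ≤ (dualCode C).map (g + 1) ⊔ dualCode C')
    {a b : Fin n → ZMod 2} (ha : a ∈ C') (hab : ¬(a = 0 ∧ b = 0))
    (hd : wQ n a b < dminb n C) (hd' : 2 * wQ n a b < 3 * dminb n C') :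
    ∃ e ∈ dualCode C, g e ⬝ᵥ a + b ⬝ᵥ e = 1 := by
  by_contra! hne
  have h0 : ∀ e ∈ dualCode C, g e ⬝ᵥ a + b ⬝ᵥ e = 0 := fun e he =>
    (by decide : ∀ p : ZMod 2, p ≠ 1 → p = 0) _ (hne e he)
  have hC : ∀ e ∈ dualCode C, ∀ c ∈ C, c ⬝ᵥ e = 0 := fun e he c hc => by
    rw [dotProduct_comm]
    exact mem_dualCode.1 he c hc
  have hb : b ∈ C' := by
    rw [← dualCode_dualCode C', mem_dualCode]
    intro e he
    simpa [dotProduct_comm e, LinearMap.mem_ker.1 (hgD he)] using h0 e (dualCode_anti hCC' he)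
  have haC : a ∈ C := by
    by_contra haC
    have hbC : b ∉ C := fun hbC => haC <| mem_of_forall_dotProduct_eq_zero hg ha fun e he => by
      simpa [hC e he b hbC] using h0 e he
    have habC : a + b ∉ C := fun habC => haC <| mem_of_forall_dotProduct_eq_zero hg1 ha
      fun e he => by
        have hae : a ⬝ᵥ e = b ⬝ᵥ e := by
          rw [← sub_eq_zero, ZModModule.sub_eq_add, ← add_dotProduct]
          exact hC e he _ habC
        rw [LinearMap.add_apply, Module.End.one_apply, add_dotProduct, dotProduct_comm e, hae]
        exact h0 e he
    have := dminb_le_wHb ha fun h => haC (h ▸ C.zero_mem)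
    have := dminb_le_wHb hb fun h => hbC (h ▸ C.zero_mem)
    have := dminb_le_wHb (C'.add_mem ha hb) fun h => habC (h ▸ C.zero_mem)
    have := wHb_add_wHb_add_wHb_add_le a b
    omega
  obtain rfl : a = 0 := eq_zero_of_wHb_lt_dminb haC ((wHb_le_wQ_left a b).trans_lt hd)
  have hbC : b ∈ C := by
    rw [← dualCode_dualCode C, mem_dualCode]
    intro e he
    simpa using h0 e he
  exact hab ⟨rfl, eq_zero_of_wHb_lt_dminb hbC ((wHb_le_wQ_right 0 b).trans_lt hd)⟩

theorem dotProduct_Xop_mul_Zop_twistedCosetState_eq_zero {n : ℕ}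
    {C C' : Submodule (ZMod 2) (Fin n → ZMod 2)} (hCC' : C ≤ C') (hEC : dualCode C ≤ C)
    {g : (Fin n → ZMod 2) →ₗ[ZMod 2] (Fin n → ZMod 2)} (hgE : ∀ e ∈ dualCode C, g e ∈ dualCode C)
    (hgD : dualCode C' ≤ LinearMap.ker g)
    (hg : dualCode C ≤ (dualCode C).map g ⊔ dualCode C')
    (hg1 : dualCode C ≤ (dualCode C).map (g + 1) ⊔ dualCode C')
    {a b : Fin n → ZMod 2} (hab : ¬(a = 0 ∧ b = 0))
    (hd : wQ n a b < dminb n C) (hd' : 2 * wQ n a b < 3 * dminb n C')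
    {x x' : Fin n → ZMod 2} (hx : x ∈ C') (hx' : x' ∈ C') :
    star (twistedCosetState (dualCode C) g x') ⬝ᵥ
      (Xop n a * Zop n b) *ᵥ twistedCosetState (dualCode C) g x = 0 := by
  by_cases hax : a + x + x' ∈ dualCode C
  · have ha : a ∈ C' := by
      have := hCC' (hEC hax)
      rwa [C'.add_mem_iff_left hx', C'.add_mem_iff_left hx] at this
    obtain ⟨e₀, he₀, hodd⟩ :=
      exists_mem_dualCode_dotProduct_eq_one hCC' hgD hg hg1 ha hab hd hd'
    exact dotProduct_Xop_mul_Zop_twistedCosetState_of_mem g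
      (fun e he e' he' => mem_dualCode.1 he e' (hEC he')) hgE he₀ hodd hax
  · exact dotProduct_Xop_mul_Zop_twistedCosetState_of_notMem g hax

end Steane

open Steane

/-- Steane enlargement: if `C` is an `[n, k, d]_2` code with
`C^⊥ ⊆ C` which can be enlarged to an `[n, k', d']_2` code `C' ⊇ C` with
`k' > k + 1`, then there is an `[[n, k + k' − n, D]]` qubit code with
`D = min{d, ⌈3d'/2⌉}`: a subspace `Q ⊆ ℂ^{2^n}` with `dim_ℂ Q = 2^{k+k'−n}`
satisfying the Knill–Laflamme condition for `D`. -/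
theorem statement11 (n k k' d d' : ℕ)
    (C C' : Submodule (ZMod 2) (Fin n → ZMod 2))
    (hk : Module.finrank (ZMod 2) C = k) (hd : d = dminb n C)
    (hdual : dualEb n C ⊆ (C : Set (Fin n → ZMod 2)))
    (hsub : C ≤ C')
    (hk' : Module.finrank (ZMod 2) C' = k') (hd' : d' = dminb n C')
    (hkk : k + 1 < k') :
    ∃ Q : Submodule ℂ ((Fin n → ZMod 2) → ℂ),
      Module.finrank ℂ Q = 2 ^ (k + k' - n) ∧
      ∀ a b : Fin n → ZMod 2, wQ n a b ≤ min d ((3 * d' + 1) / 2) - 1 →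
        ∀ φ ∈ Q, ∀ ψ ∈ Q, star φ ⬝ᵥ ψ = 0 →
          star φ ⬝ᵥ (Xop n a * Zop n b).mulVec ψ = 0 := by
  classical
  set E := dualCode C
  have hEC : E ≤ C := fun x hx => hdual (mem_dualCode.1 hx)
  have hDE : dualCode C' ≤ E := dualCode_anti hsub
  have hfinE : finrank (ZMod 2) E = n - k := by rw [finrank_dualCode, Fintype.card_fin, hk]
  have hfinD : finrank (ZMod 2) (dualCode C') = n - k' := by
    rw [finrank_dualCode, Fintype.card_fin, hk']
  have hkn : k ≤ n := hk ▸ (Submodule.finrank_le C).trans (finrank_fin_fun (ZMod 2)).le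
  have hk'n : k' ≤ n := hk' ▸ (Submodule.finrank_le C').trans (finrank_fin_fun (ZMod 2)).le
  have hnk : n - k ≤ k := hfinE ▸ hk ▸ Submodule.finrank_mono hEC
  obtain ⟨g, hgE, hgD, hg, hg1⟩ := exists_twist hDE (by omega)
  obtain ⟨R, hRC', hRE, hfinR⟩ := exists_disjoint_finrank_add_eq (hEC.trans hsub)
  refine ⟨Submodule.span ℂ (Set.range fun x : R => twistedCosetState E g x), ?_, ?_⟩
  · rw [finrank_span_eq_card (linearIndependent_twistedCosetState g hRE),
      card_eq_pow_finrank (K := ZMod 2), ZMod.card]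
    congr 1
    omega
  intro a b hw φ hφ ψ hψ horth
  by_cases hab : a = 0 ∧ b = 0
  · rwa [hab.1, hab.2, Xop_zero_mul_Zop_zero_mulVec]
  have hwQ := wQ_pos hab
  refine dotProduct_mulVec_eq_zero_of_mem_span _ ?_ hφ hψ
  rintro _ ⟨x', rfl⟩ _ ⟨x, rfl⟩
  exact dotProduct_Xop_mul_Zop_twistedCosetState_eq_zero hsub hEC hgE hgD hg hg1 hab
    (by omega) (by omega) (hRC' x.2) (hRC' x'.2)
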